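/- arXiv:2204.07405 — 6 statements merged into one kernel-verified Lean document; each statement's English description precedes it below -/
import Mathlib

section
/- Every mixed unitary channel Ψ(ρ) = Σ_i p_i U_i ρ U_i† (with p_i ≥ 0, Σ p_i = 1, U_i unitary) satisfies T^Q(Ψ(ρ^A), Ψ(ρ^B)) ≤ T^Q(ρ^A, ρ^B) for all density matrices ρ^A, ρ^B of order N. -/
open Matrix Complex
open scoped Matrix Kronecker ComplexOrder

noncomputable section

/-- Partial trace over the second factor. -/
def ptraceB {N : ℕ} (ρ : Matrix (Fin N × Fin N) (Fin N × Fin N) ℂ) :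
    Matrix (Fin N) (Fin N) ℂ :=
  Matrix.of fun i j => ∑ k, ρ (i, k) (j, k)

/-- Partial trace over the first factor. -/
def ptraceA {N : ℕ} (ρ : Matrix (Fin N × Fin N) (Fin N × Fin N) ℂ) :
    Matrix (Fin N) (Fin N) ℂ :=
  Matrix.of fun i j => ∑ k, ρ (k, i) (k, j)

/-- A density matrix: positive semidefinite with unit trace. -/
def IsDensity {n : Type*} [Fintype n] (ρ : Matrix n n ℂ) : Prop :=
  ρ.PosSemidef ∧ ρ.trace = 1

/-- The set of couplings of two states. -/
def couplings {N : ℕ} (ρA ρB : Matrix (Fin N) (Fin N) ℂ) :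
    Set (Matrix (Fin N × Fin N) (Fin N × Fin N) ℂ) :=
  {ρ | IsDensity ρ ∧ ptraceB ρ = ρA ∧ ptraceA ρ = ρB}

/-- The swap operator on `ℂ^N ⊗ ℂ^N`. -/
def swapOp (N : ℕ) : Matrix (Fin N × Fin N) (Fin N × Fin N) ℂ :=
  Matrix.of fun p q => if p.1 = q.2 ∧ p.2 = q.1 then 1 else 0

/-- The projective quantum cost matrix `C = (1/2)(I - S)`. -/
def projCost (N : ℕ) : Matrix (Fin N × Fin N) (Fin N × Fin N) ℂ :=
  (1 / 2 : ℂ) • ((1 : Matrix (Fin N × Fin N) (Fin N × Fin N) ℂ) - swapOp N)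

/-- The optimal quantum transport cost for a cost matrix `C`. -/
def TQ {N : ℕ} (C : Matrix (Fin N × Fin N) (Fin N × Fin N) ℂ)
    (ρA ρB : Matrix (Fin N) (Fin N) ℂ) : ℝ :=
  sInf {x : ℝ | ∃ ρ ∈ couplings ρA ρB, ((C * ρ).trace).re = x}

/-!
A coupling `ρ` of `(ρA, ρB)` is sent by the mixed unitary channel with unitaries `U i ⊗ U i` to a
coupling of the two output states: by the duality `tr (ptraceB ρ * X) = tr (ρ * (X ⊗ 1))`, partial
traces intertwine conjugation by `U ⊗ V` with conjugation by `U` (resp. `V`). The swap operator,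
hence `C = (1 - S) / 2`, commutes with every `U ⊗ U`, so the new coupling has the same cost. Every
cost attained for the inputs is thus attained for the outputs; the infimum is a genuine one
(not the `sInf` junk value) because `C ≥ 0` bounds all costs below and `ρA ⊗ ρB` is a coupling.
-/

lemma Matrix.trace_mul_mul_mul_cycle {n R : Type*} [Fintype n] [CommSemiring R]
    (A B C D : Matrix n n R) : (A * B * C * D).trace = (B * (C * D * A)).trace := by
  simp only [Matrix.mul_assoc]
  rw [trace_mul_comm A]
  simp only [Matrix.mul_assoc]

lemma Matrix.trace_conj_of_conjTranspose_mul_self {n R : Type*} [Fintype n] [DecidableEq n]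
    [CommSemiring R] [StarRing R] {V : Matrix n n R} (hV : Vᴴ * V = 1) (X : Matrix n n R) :
    (V * X * Vᴴ).trace = X.trace := by
  rw [trace_mul_cycle, hV, one_mul]

lemma Matrix.conjTranspose_mul_self_kronecker {m R : Type*} [Fintype m] [DecidableEq m]
    [CommSemiring R] [StarRing R] {U V : Matrix m m R} (hU : Uᴴ * U = 1) (hV : Vᴴ * V = 1) :
    (U ⊗ₖ V)ᴴ * (U ⊗ₖ V) = 1 := by
  rw [conjTranspose_kronecker, ← mul_kronecker_mul, hU, hV, one_kronecker_one]

lemma Matrix.PosSemidef.re_trace_mul_nonneg {n : Type*} [Fintype n] [DecidableEq n]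
    {A B : Matrix n n ℂ} (hA : A.PosSemidef) (hB : B.PosSemidef) : 0 ≤ (A * B).trace.re := by
  open scoped MatrixOrder in
  obtain ⟨C, rfl⟩ := CStarAlgebra.nonneg_iff_eq_star_mul_self.mp hA.nonneg
  rw [star_eq_conjTranspose, trace_mul_cycle, trace_mul_cycle]
  exact (Complex.nonneg_iff.mp (hB.mul_mul_conjTranspose_same C).trace_nonneg).1

section SwapAndCost

variable (N : ℕ)

lemma swapOp_conjTranspose : (swapOp N)ᴴ = swapOp N := by
  ext p q
  simp only [conjTranspose_apply, swapOp, of_apply, eq_comm (a := q.1), eq_comm (a := q.2),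
    and_comm]
  split_ifs <;> simp

lemma swapOp_mul_self : swapOp N * swapOp N = 1 := by
  ext p q
  simp [Matrix.mul_apply, swapOp, Fintype.sum_prod_type, one_apply, ite_and, Prod.ext_iff, eq_comm]

lemma commute_swapOp_kronecker_self (U : Matrix (Fin N) (Fin N) ℂ) :
    Commute (swapOp N) (U ⊗ₖ U) := by
  ext p q
  simp [Matrix.mul_apply, swapOp, Fintype.sum_prod_type, ite_and, mul_comm]

lemma projCost_conjTranspose : (projCost N)ᴴ = projCost N := by
  rw [projCost, conjTranspose_smul, conjTranspose_sub, conjTranspose_one, swapOp_conjTranspose]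
  norm_num

lemma projCost_mul_self : projCost N * projCost N = projCost N := by
  have h : (1 - swapOp N) * (1 - swapOp N) = (2 : ℂ) • (1 - swapOp N) := by
    rw [Matrix.sub_mul, Matrix.mul_sub, Matrix.mul_sub, one_mul, one_mul, Matrix.mul_one,
      swapOp_mul_self, two_smul]
    abel
  rw [projCost, Matrix.smul_mul, Matrix.mul_smul, h, smul_smul, smul_smul]
  norm_num

lemma projCost_posSemidef : (projCost N).PosSemidef := by
  have h : projCost N = (projCost N)ᴴ * projCost N := by
    rw [projCost_conjTranspose, projCost_mul_self]
  exact h ▸ posSemidef_conjTranspose_mul_self _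

lemma commute_projCost_kronecker_self (U : Matrix (Fin N) (Fin N) ℂ) :
    Commute (projCost N) (U ⊗ₖ U) :=
  ((Commute.one_left _).sub_left (commute_swapOp_kronecker_self N U)).smul_left _

end SwapAndCost

def mixedUnitary {n ι : Type*} [Fintype n] [Fintype ι] (p : ι → ℝ) (U : ι → Matrix n n ℂ)
    (ρ : Matrix n n ℂ) : Matrix n n ℂ :=
  ∑ i, p i • (U i * ρ * (U i)ᴴ)

section MixedUnitary

variable {n ι : Type*} [Fintype n] [DecidableEq n] [Fintype ι] {p : ι → ℝ} {U : ι → Matrix n n ℂ}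

lemma IsDensity.mixedUnitary (hp : ∀ i, 0 ≤ p i) (hp1 : ∑ i, p i = 1)
    (hU : ∀ i, (U i)ᴴ * U i = 1) {ρ : Matrix n n ℂ} (hρ : IsDensity ρ) :
    IsDensity (mixedUnitary p U ρ) := by
  refine ⟨posSemidef_sum _ fun i _ => (hρ.1.mul_mul_conjTranspose_same (U i)).smul (hp i), ?_⟩
  simp only [_root_.mixedUnitary, trace_sum, trace_smul,
    trace_conj_of_conjTranspose_mul_self (hU _), hρ.2, ← Finset.sum_smul, hp1, one_smul]

lemma trace_mul_mixedUnitary_of_commute (hp1 : ∑ i, p i = 1) (hU : ∀ i, (U i)ᴴ * U i = 1)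
    {C : Matrix n n ℂ} (hC : ∀ i, Commute C (U i)) (ρ : Matrix n n ℂ) :
    (C * mixedUnitary p U ρ).trace = (C * ρ).trace := by
  have hconj : ∀ i, C * (U i * ρ * (U i)ᴴ) = U i * (C * ρ) * (U i)ᴴ := fun i => by
    rw [← Matrix.mul_assoc, ← Matrix.mul_assoc, (hC i).eq, Matrix.mul_assoc (U i)]
  simp only [mixedUnitary, Matrix.mul_sum, Matrix.mul_smul, trace_sum, trace_smul, hconj,
    trace_conj_of_conjTranspose_mul_self (hU _), ← Finset.sum_smul, hp1, one_smul]

end MixedUnitary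

section PartialTrace

variable {N : ℕ}

lemma trace_ptraceB_mul (ρ : Matrix (Fin N × Fin N) (Fin N × Fin N) ℂ)
    (X : Matrix (Fin N) (Fin N) ℂ) : (ptraceB ρ * X).trace = (ρ * (X ⊗ₖ 1)).trace := by
  simp only [trace, ptraceB, diag_apply, mul_apply, of_apply, Finset.sum_mul, kroneckerMap_apply,
    one_apply, mul_ite, mul_one, mul_zero, Fintype.sum_prod_type, Finset.sum_ite_eq',
    Finset.mem_univ, ↓reduceIte]
  exact Finset.sum_congr rfl fun _ _ => Finset.sum_comm

lemma trace_ptraceA_mul (ρ : Matrix (Fin N × Fin N) (Fin N × Fin N) ℂ)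
    (X : Matrix (Fin N) (Fin N) ℂ) : (ptraceA ρ * X).trace = (ρ * (1 ⊗ₖ X)).trace := by
  simp only [trace, ptraceA, diag_apply, mul_apply, of_apply, Finset.sum_mul, kroneckerMap_apply,
    one_apply, ite_mul, one_mul, zero_mul, mul_ite, mul_zero, Fintype.sum_prod_type,
    Finset.sum_ite_irrel, Finset.sum_const_zero, Finset.sum_ite_eq', Finset.mem_univ, ↓reduceIte]
  exact (Finset.sum_congr rfl fun _ _ => Finset.sum_comm).trans Finset.sum_comm

lemma ptraceB_kronecker_conj (U V : Matrix (Fin N) (Fin N) ℂ) (hV : Vᴴ * V = 1)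
    (ρ : Matrix (Fin N × Fin N) (Fin N × Fin N) ℂ) :
    ptraceB ((U ⊗ₖ V) * ρ * (U ⊗ₖ V)ᴴ) = U * ptraceB ρ * Uᴴ := by
  refine ext_iff_trace_mul_right.mpr fun X => ?_
  calc (ptraceB ((U ⊗ₖ V) * ρ * (U ⊗ₖ V)ᴴ) * X).trace
      = (ρ * ((U ⊗ₖ V)ᴴ * (X ⊗ₖ 1) * (U ⊗ₖ V))).trace := by
        rw [trace_ptraceB_mul, trace_mul_mul_mul_cycle]
    _ = (ρ * ((Uᴴ * X * U) ⊗ₖ 1)).trace := by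
        rw [conjTranspose_kronecker, ← mul_kronecker_mul, ← mul_kronecker_mul, Matrix.mul_one, hV]
    _ = (U * ptraceB ρ * Uᴴ * X).trace := by
        rw [← trace_ptraceB_mul, trace_mul_mul_mul_cycle]

lemma ptraceA_kronecker_conj (U V : Matrix (Fin N) (Fin N) ℂ) (hU : Uᴴ * U = 1)
    (ρ : Matrix (Fin N × Fin N) (Fin N × Fin N) ℂ) :
    ptraceA ((U ⊗ₖ V) * ρ * (U ⊗ₖ V)ᴴ) = V * ptraceA ρ * Vᴴ := by
  refine ext_iff_trace_mul_right.mpr fun X => ?_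
  calc (ptraceA ((U ⊗ₖ V) * ρ * (U ⊗ₖ V)ᴴ) * X).trace
      = (ρ * ((U ⊗ₖ V)ᴴ * (1 ⊗ₖ X) * (U ⊗ₖ V))).trace := by
        rw [trace_ptraceA_mul, trace_mul_mul_mul_cycle]
    _ = (ρ * (1 ⊗ₖ (Vᴴ * X * V))).trace := by
        rw [conjTranspose_kronecker, ← mul_kronecker_mul, ← mul_kronecker_mul, Matrix.mul_one, hU]
    _ = (V * ptraceA ρ * Vᴴ * X).trace := by
        rw [← trace_ptraceA_mul, trace_mul_mul_mul_cycle]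

lemma ptraceB_sum_smul {ι : Type*} [Fintype ι] (c : ι → ℝ)
    (M : ι → Matrix (Fin N × Fin N) (Fin N × Fin N) ℂ) :
    ptraceB (∑ i, c i • M i) = ∑ i, c i • ptraceB (M i) := by
  ext a b
  simp only [ptraceB, Matrix.sum_apply, Matrix.smul_apply, smul_of, of_apply, Pi.smul_apply,
    Finset.smul_sum]
  exact Finset.sum_comm

lemma ptraceA_sum_smul {ι : Type*} [Fintype ι] (c : ι → ℝ)
    (M : ι → Matrix (Fin N × Fin N) (Fin N × Fin N) ℂ) :
    ptraceA (∑ i, c i • M i) = ∑ i, c i • ptraceA (M i) := by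
  ext a b
  simp only [ptraceA, Matrix.sum_apply, Matrix.smul_apply, smul_of, of_apply, Pi.smul_apply,
    Finset.smul_sum]
  exact Finset.sum_comm

end PartialTrace

section Couplings

variable {N : ℕ} {ι : Type*} [Fintype ι] {p : ι → ℝ} {U V : ι → Matrix (Fin N) (Fin N) ℂ}

lemma ptraceB_mixedUnitary_kronecker (hV : ∀ i, (V i)ᴴ * V i = 1)
    (ρ : Matrix (Fin N × Fin N) (Fin N × Fin N) ℂ) :
    ptraceB (mixedUnitary p (fun i => U i ⊗ₖ V i) ρ) = mixedUnitary p U (ptraceB ρ) := by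
  simp only [mixedUnitary, ptraceB_sum_smul, ptraceB_kronecker_conj _ _ (hV _)]

lemma ptraceA_mixedUnitary_kronecker (hU : ∀ i, (U i)ᴴ * U i = 1)
    (ρ : Matrix (Fin N × Fin N) (Fin N × Fin N) ℂ) :
    ptraceA (mixedUnitary p (fun i => U i ⊗ₖ V i) ρ) = mixedUnitary p V (ptraceA ρ) := by
  simp only [mixedUnitary, ptraceA_sum_smul, ptraceA_kronecker_conj _ _ (hU _)]

lemma kronecker_mem_couplings {ρA ρB : Matrix (Fin N) (Fin N) ℂ} (hA : IsDensity ρA)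
    (hB : IsDensity ρB) : ρA ⊗ₖ ρB ∈ couplings ρA ρB := by
  refine ⟨⟨hA.1.kronecker hB.1, by rw [trace_kronecker, hA.2, hB.2, mul_one]⟩, ?_, ?_⟩
  · ext i j
    simp only [ptraceB, of_apply, kroneckerMap_apply, ← Finset.mul_sum]
    change _ * ρB.trace = _
    rw [hB.2, mul_one]
  · ext i j
    simp only [ptraceA, of_apply, kroneckerMap_apply, ← Finset.sum_mul]
    change ρA.trace * _ = _
    rw [hA.2, one_mul]

lemma mixedUnitary_kronecker_mem_couplings (hp : ∀ i, 0 ≤ p i) (hp1 : ∑ i, p i = 1)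
    (hU : ∀ i, (U i)ᴴ * U i = 1) {ρA ρB : Matrix (Fin N) (Fin N) ℂ}
    {ρ : Matrix (Fin N × Fin N) (Fin N × Fin N) ℂ} (hρ : ρ ∈ couplings ρA ρB) :
    mixedUnitary p (fun i => U i ⊗ₖ U i) ρ ∈
      couplings (mixedUnitary p U ρA) (mixedUnitary p U ρB) := by
  obtain ⟨hρ, hρA, hρB⟩ := hρ
  refine ⟨hρ.mixedUnitary hp hp1 fun i => conjTranspose_mul_self_kronecker (hU i) (hU i), ?_, ?_⟩
  · rw [ptraceB_mixedUnitary_kronecker hU, hρA]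
  · rw [ptraceA_mixedUnitary_kronecker hU, hρB]

end Couplings

lemma TQ_le_TQ_of_forall_mem_couplings {N : ℕ} {C : Matrix (Fin N × Fin N) (Fin N × Fin N) ℂ}
    (hC : C.PosSemidef) {ρA ρB σA σB : Matrix (Fin N) (Fin N) ℂ}
    (hne : (couplings ρA ρB).Nonempty)
    (h : ∀ ρ ∈ couplings ρA ρB, ∃ σ ∈ couplings σA σB, (C * σ).trace.re ≤ (C * ρ).trace.re) :
    TQ C σA σB ≤ TQ C ρA ρB := by
  have hbdd : BddBelow {x | ∃ σ ∈ couplings σA σB, (C * σ).trace.re = x} := by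
    refine ⟨0, ?_⟩
    rintro _ ⟨σ, hσ, rfl⟩
    exact hC.re_trace_mul_nonneg hσ.1.1
  obtain ⟨ρ₀, hρ₀⟩ := hne
  refine le_csInf ⟨_, ρ₀, hρ₀, rfl⟩ ?_
  rintro _ ⟨ρ, hρ, rfl⟩
  obtain ⟨σ, hσ, hle⟩ := h ρ hρ
  exact (csInf_le hbdd ⟨σ, hσ, rfl⟩).trans hle

theorem TQ_monotone_mixed_unitary {N : ℕ} {ι : Type*} [Fintype ι]
    (p : ι → ℝ) (hp : ∀ i, 0 ≤ p i) (hp1 : ∑ i, p i = 1)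
    (U : ι → Matrix (Fin N) (Fin N) ℂ)
    (hU : ∀ i, U i ∈ Matrix.unitaryGroup (Fin N) ℂ)
    (ρA ρB : Matrix (Fin N) (Fin N) ℂ) (hA : IsDensity ρA) (hB : IsDensity ρB) :
    TQ (projCost N) (∑ i, p i • (U i * ρA * (U i)ᴴ)) (∑ i, p i • (U i * ρB * (U i)ᴴ)) ≤
      TQ (projCost N) ρA ρB := by
  have hU' : ∀ i, (U i)ᴴ * U i = 1 := fun i => Unitary.star_mul_self_of_mem (hU i)
  refine TQ_le_TQ_of_forall_mem_couplings (projCost_posSemidef N)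
    ⟨_, kronecker_mem_couplings hA hB⟩ fun ρ hρ =>
      ⟨_, mixedUnitary_kronecker_mem_couplings hp hp1 hU' hρ, le_of_eq ?_⟩
  rw [trace_mul_mixedUnitary_of_commute hp1
    (fun i => conjTranspose_mul_self_kronecker (hU' i) (hU' i))
    (fun i => commute_projCost_kronecker_self N (U i))]
end
end

section
/- Let F be the 4×4 real symmetric matrix with F₁₁ = -(c+d+x), F₂₂ = 1-c+d-x, F₃₃ = 1+c-d-x, F₄₄ = c+d-x, F₂₃ = F₃₂ = -1, and all other entries zero. If F is positive semidefinite, then x ≤ 0, |c + d| ≤ -x, |c - d| ≤ 1 - x, and (c-d)² ≤ x(x-2). -/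
open Matrix

theorem Matrix.PosSemidef.sq_apply_le_mul_diag {n : Type*} [Fintype n] {A : Matrix n n ℝ}
    (hA : A.PosSemidef) (i j : n) : A i j ^ 2 ≤ A i i * A j j := by
  have hdet := (hA.submatrix ![i, j]).det_nonneg
  have hsymm : A j i = A i j := by simpa using hA.isHermitian.apply i j
  rw [det_fin_two] at hdet
  simp only [submatrix_apply, cons_val_zero, cons_val_one, hsymm] at hdet
  linarith [sq (A i j)]

theorem F_posSemidef_constraints (c d x : ℝ)
    (hF : (!![-(c + d + x), 0, 0, 0;
              0, 1 - c + d - x, -1, 0;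
              0, -1, 1 + c - d - x, 0;
              0, 0, 0, c + d - x] : Matrix (Fin 4) (Fin 4) ℝ).PosSemidef) :
    x ≤ 0 ∧ |c + d| ≤ -x ∧ |c - d| ≤ 1 - x ∧ (c - d) ^ 2 ≤ x * (x - 2) := by
  have h₁ := hF.diag_nonneg (i := 0)
  have h₂ := hF.diag_nonneg (i := 1)
  have h₃ := hF.diag_nonneg (i := 2)
  have h₄ := hF.diag_nonneg (i := 3)
  have hminor := hF.sq_apply_le_mul_diag 1 2
  simp only [of_apply, cons_val', cons_val_zero, cons_val_one, cons_val, cons_val_fin_one]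
    at h₁ h₂ h₃ h₄ hminor
  refine ⟨by linarith, abs_le.2 ⟨by linarith, by linarith⟩,
    abs_le.2 ⟨by linarith, by linarith⟩, by linear_combination hminor⟩
end

section
/- Let c, d, x ∈ R satisfy x ≤ 0, x ≤ c+d ≤ -x, x-1 ≤ c-d ≤ 1-x, and (c-d)² ≤ x(x-2), and let α, β ∈ [-1,1]. Then the 4×4 symmetric matrix F^Φ with diagonal entries F^Φ₁₁ = -(c+d)α - x, F^Φ₂₂ = 1 - cα + dβ - x, F^Φ₃₃ = 1 + cβ - dα - x, F^Φ₄₄ = (c+d)β - x, off-diagonal entries F^Φ₂₃ = F^Φ₃₂ = -1, and all other entries zero, is positive semidefinite. -/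
/-!
Put `s = 1 - x`, `p = c + d`, `q = c - d`, `t = (β - α) / 2`, `w = (α + β) / 2`. The hypotheses
give `|p| ≤ s - 1`, `q² ≤ s² - 1` and `|t| + |w| ≤ 1`, and the `2 × 2` block has trace `2 (s + p t)`
and determinant `(s + p t)² - q² w² - 1`. Since `s + p t ≥ 1 + (s - 1)(1 - |t|)` and
`w² ≤ (1 - |t|)²`, the determinant is at least `2 (s - 1)(1 - |t|) |t| ≥ 0`.
-/

open Matrix

theorem neg_le_mul_of_abs_le {p r t : ℝ} (hp : |p| ≤ r) (ht : |t| ≤ 1) : -r ≤ p * t := by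
  have : |p * t| ≤ r := by
    rw [abs_mul]
    nlinarith [abs_nonneg p, abs_nonneg t]
  exact (abs_le.mp this).1

theorem abs_sub_add_abs_add_le_two {a b : ℝ} (ha : |a| ≤ 1) (hb : |b| ≤ 1) :
    |b - a| + |a + b| ≤ 2 := by
  rcases abs_le.mp ha with ⟨ha₁, ha₂⟩
  rcases abs_le.mp hb with ⟨hb₁, hb₂⟩
  rcases abs_cases (b - a) with ⟨h, -⟩ | ⟨h, -⟩ <;>
    rcases abs_cases (a + b) with ⟨h', -⟩ | ⟨h', -⟩ <;> linarith

theorem one_add_sq_mul_sq_le_sq {s p q t w : ℝ} (hp : |p| ≤ s - 1) (hq : q ^ 2 ≤ s ^ 2 - 1)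
    (htw : |t| + |w| ≤ 1) : 1 + q ^ 2 * w ^ 2 ≤ (s + p * t) ^ 2 := by
  have hs : 0 ≤ s - 1 := (abs_nonneg p).trans hp
  have hu : 0 ≤ 1 - |t| := by linarith [abs_nonneg w]
  have hpt : 1 + (s - 1) * (1 - |t|) ≤ s + p * t := by
    have : |p * t| ≤ (s - 1) * |t| := by
      rw [abs_mul]
      exact mul_le_mul_of_nonneg_right hp (abs_nonneg t)
    linarith [neg_abs_le (p * t)]
  have hw : w ^ 2 ≤ (1 - |t|) ^ 2 := by
    rw [← sq_abs w]
    exact pow_le_pow_left₀ (abs_nonneg w) (by linarith) 2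
  calc 1 + q ^ 2 * w ^ 2 ≤ 1 + (s ^ 2 - 1) * (1 - |t|) ^ 2 := by
        gcongr
        nlinarith
    _ = (1 + (s - 1) * (1 - |t|)) ^ 2 - 2 * (s - 1) * (1 - |t|) * |t| := by ring
    _ ≤ (1 + (s - 1) * (1 - |t|)) ^ 2 := by
        have := mul_nonneg (mul_nonneg hs hu) (abs_nonneg t)
        linarith
    _ ≤ (s + p * t) ^ 2 := pow_le_pow_left₀ (by positivity) hpt 2

theorem mul_sq_sub_two_mul_add_mul_sq_nonneg {a b : ℝ} (hab : 0 ≤ a + b) (h : 1 ≤ a * b)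
    (y z : ℝ) : 0 ≤ a * y ^ 2 - 2 * y * z + b * z ^ 2 := by
  have ha : 0 < a := by nlinarith
  have hsos : a * (a * y ^ 2 - 2 * y * z + b * z ^ 2) = (a * y - z) ^ 2 + (a * b - 1) * z ^ 2 := by
    ring
  have : 0 ≤ a * (a * y ^ 2 - 2 * y * z + b * z ^ 2) := by
    rw [hsos]
    have := sq_nonneg z
    positivity
  exact nonneg_of_mul_nonneg_right (by linarith) ha

theorem posSemidef_of_nonneg_of_one_le_mul {a b c e : ℝ} (ha : 0 ≤ a) (he : 0 ≤ e)
    (hbc : 0 ≤ b + c) (hbc' : 1 ≤ b * c) :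
    (!![a, 0, 0, 0; 0, b, -1, 0; 0, -1, c, 0; 0, 0, 0, e] :
      Matrix (Fin 4) (Fin 4) ℝ).PosSemidef := by
  refine .of_dotProduct_mulVec_nonneg ?_ fun v => ?_
  · ext i j
    fin_cases i <;> fin_cases j <;> simp
  · have hblock := mul_sq_sub_two_mul_add_mul_sq_nonneg hbc hbc' (v 1) (v 2)
    have h₀ := mul_nonneg ha (sq_nonneg (v 0))
    have h₃ := mul_nonneg he (sq_nonneg (v 3))
    simp only [dotProduct, mulVec, Fin.sum_univ_four, Pi.star_apply, star_trivial, of_apply,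
      cons_val', cons_val_fin_one, cons_val_zero, cons_val_one, cons_val, zero_mul, add_zero,
      zero_add, neg_mul, one_mul]
    linarith

theorem FPhi_posSemidef_general (c d x α β : ℝ)
    (h1 : x ≤ c + d) (h2 : c + d ≤ -x)
    (h5 : (c - d) ^ 2 ≤ x * (x - 2))
    (hα : α ∈ Set.Icc (-1 : ℝ) 1) (hβ : β ∈ Set.Icc (-1 : ℝ) 1) :
    (!![-(c + d) * α - x, 0, 0, 0;
        0, 1 - c * α + d * β - x, -1, 0;
        0, -1, 1 + c * β - d * α - x, 0;
        0, 0, 0, (c + d) * β - x] : Matrix (Fin 4) (Fin 4) ℝ).PosSemidef := by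
  have hp : |c + d| ≤ -x := abs_le.mpr ⟨by linarith, h2⟩
  have hα' : |α| ≤ 1 := abs_le.mpr hα
  have hβ' : |β| ≤ 1 := abs_le.mpr hβ
  have htw : |(β - α) / 2| + |(α + β) / 2| ≤ 1 := by
    rw [abs_div, abs_div, abs_two]
    linarith [abs_sub_add_abs_add_le_two hα' hβ']
  have hdet := one_add_sq_mul_sq_le_sq (s := 1 - x) (p := c + d) (q := c - d)
    (by linarith) (by linarith) htw
  refine posSemidef_of_nonneg_of_one_le_mul ?_ ?_ ?_ ?_
  · linarith [neg_le_mul_of_abs_le hp (abs_neg α ▸ hα')]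
  · linarith [neg_le_mul_of_abs_le hp hβ']
  · linarith [neg_le_mul_of_abs_le hp ((le_add_of_nonneg_right (abs_nonneg _)).trans htw)]
  · linarith

theorem FPhi_posSemidef (c d x α β : ℝ)
    (hx : x ≤ 0) (h1 : x ≤ c + d) (h2 : c + d ≤ -x)
    (h3 : x - 1 ≤ c - d) (h4 : c - d ≤ 1 - x)
    (h5 : (c - d) ^ 2 ≤ x * (x - 2))
    (hα : α ∈ Set.Icc (-1 : ℝ) 1) (hβ : β ∈ Set.Icc (-1 : ℝ) 1) :
    (!![-(c + d) * α - x, 0, 0, 0;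
        0, 1 - c * α + d * β - x, -1, 0;
        0, -1, 1 + c * β - d * α - x, 0;
        0, 0, 0, (c + d) * β - x] : Matrix (Fin 4) (Fin 4) ℝ).PosSemidef :=
  FPhi_posSemidef_general c d x α β h1 h2 h5 hα hβ
end

section
/- For real numbers c, d, x, α, β with x ≤ 0, x ≤ c+d ≤ -x, x-1 ≤ c-d ≤ 1-x, (c-d)² ≤ x(x-2), and α, β ∈ [-1,1], the inequality (1 - x - (1/2)(c+d)(α-β))² - (1/4)(c-d)²(α+β)² ≥ 1 holds. -/
set_option maxHeartbeats 800000 in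
theorem minor_estimate (c d x α β : ℝ)
    (hx : x ≤ 0) (h1 : x ≤ c + d) (h2 : c + d ≤ -x)
    (h3 : x - 1 ≤ c - d) (h4 : c - d ≤ 1 - x)
    (h5 : (c - d) ^ 2 ≤ x * (x - 2))
    (hα : α ∈ Set.Icc (-1 : ℝ) 1) (hβ : β ∈ Set.Icc (-1 : ℝ) 1) :
    (1 - x - (1 / 2) * (c + d) * (α - β)) ^ 2
      - (1 / 4) * (c - d) ^ 2 * (α + β) ^ 2 ≥ 1 := by
  obtain ⟨ha1, ha2⟩ := hα
  obtain ⟨hb1, hb2⟩ := hβ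
  set P := |α - β| with hPdef
  have hPnn : 0 ≤ P := abs_nonneg _
  have hPQ : P + |α + β| ≤ 2 := by
    rcases abs_cases (α - β) with ⟨e1, _⟩ | ⟨e1, _⟩ <;>
      rcases abs_cases (α + β) with ⟨e2, _⟩ | ⟨e2, _⟩ <;>
      rw [hPdef, e1, e2] <;> linarith
  have hP2 : P ≤ 2 := by linarith [abs_nonneg (α + β)]
  have hs : |c + d| ≤ -x := abs_le.2 ⟨by linarith, h2⟩
  have F1 : (c + d) * (α - β) ≤ (-x) * P := by
    calc (c + d) * (α - β) ≤ |(c + d) * (α - β)| := le_abs_self _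
    _ = |c + d| * P := by rw [abs_mul]
    _ ≤ (-x) * P := mul_le_mul_of_nonneg_right hs hPnn
  have hA : 1 - x - (1 / 2) * (c + d) * (α - β) ≥ 1 - x + x * P / 2 := by linarith
  have hB : (1 : ℝ) ≤ 1 - x + x * P / 2 := by
    have h := mul_nonneg (neg_nonneg.2 hx) (by linarith : (0 : ℝ) ≤ 1 - P / 2)
    nlinarith [h]
  have hA2 : (1 - x - (1 / 2) * (c + d) * (α - β)) ^ 2 ≥ (1 - x + x * P / 2) ^ 2 :=
    pow_le_pow_left₀ (by linarith) hA 2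
  have hxx : 0 ≤ x * (x - 2) := by nlinarith [sq_nonneg (c - d)]
  have F2 : (1 / 4) * (c - d) ^ 2 * (α + β) ^ 2 ≤ (1 / 4) * (x * (x - 2)) * (α + β) ^ 2 := by
    apply mul_le_mul_of_nonneg_right _ (sq_nonneg _)
    linarith
  have F3 : (α + β) ^ 2 ≤ (2 - P) ^ 2 := by
    rw [← sq_abs (α + β)]
    exact pow_le_pow_left₀ (abs_nonneg _) (by linarith) 2
  have F4 : (1 / 4) * (x * (x - 2)) * (α + β) ^ 2 ≤ (1 / 4) * (x * (x - 2)) * (2 - P) ^ 2 :=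
    mul_le_mul_of_nonneg_left F3 (by linarith)
  have key : 0 ≤ (-x) * P * (2 - P) :=
    mul_nonneg (mul_nonneg (by linarith) hPnn) (by linarith)
  have idt : (1 - x + x * P / 2) ^ 2 - (1 / 4) * (x * (x - 2)) * (2 - P) ^ 2
      = 1 + (-x) * P * (2 - P) / 2 := by ring
  linarith [hA2, F2, F4, key, idt]
end

section
/- For all real ξ with |ξ| < 1, real v₁, v₂, φ, and t > 0, the remainder R := |√(1 + (ξ + 2v₁t)cos(φ + v₂t)) - √(1 + ξ cos φ) - (2v₁t cos φ - ξ v₂ t sin φ)/(2√(1 + ξ cos φ))| satisfies R ≤ C₁ t² + C₂ t³ for constants C₁ = (|ξ|v₂² + 4|v₁v₂|)/(2√(1-|ξ|)) + (|ξ v₂| + 2|v₁|)²/(1-|ξ|)^{3/2} and C₂ = |v₂|³/(24√(1-|ξ|)), provided t is small enough that 1 + (ξ + 2v₁t)cos(φ + v₂t) ≥ 0. -/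
/-!
With `a = 1 + ξ cos φ`, `b` the perturbed radicand and `d` the linear term, rationalising gives
`√b - √a - d / (2√a) = (b - a - d - (√b - √a)²) / (2√a)` with `(√b - √a)² ≤ (b - a)² / a`, and
`a ≥ 1 - |ξ|`. So it suffices that `b - a = O(t)` (cosine is 1-Lipschitz) and `b - a - d = O(t²)`.
The latter rests on `cos (φ + h) - cos φ + h sin φ
= -2 sin (φ + h/2) (sin (h/2) - h/2) - h (sin (φ + h/2) - sin φ)` (sum-to-product), whose terms
are at most `|h|³/24` (by `|sin θ - θ| ≤ |θ|³/6`) and `h²/2`.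
-/

open Real

namespace Real

theorem abs_cos_add_sub_cos_add_mul_sin_le (φ h : ℝ) :
    |cos (φ + h) - cos φ + h * sin φ| ≤ h ^ 2 / 2 + |h| ^ 3 / 24 := by
  have hcos : cos (φ + h) - cos φ = -2 * sin (φ + h / 2) * sin (h / 2) := by
    rw [cos_sub_cos]; ring_nf
  have hsplit : cos (φ + h) - cos φ + h * sin φ
      = -2 * sin (φ + h / 2) * (sin (h / 2) - h / 2) - h * (sin (φ + h / 2) - sin φ) := by
    linear_combination hcos
  have hcube : |sin (h / 2) - h / 2| ≤ |h / 2| ^ 3 / 6 := by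
    rw [abs_sub_comm]; exact abs_sub_sin_le _
  have hlip : |sin (φ + h / 2) - sin φ| ≤ |h / 2| := by
    simpa using abs_sin_sub_sin_le (φ + h / 2) φ
  rw [hsplit]
  calc _ ≤ 2 * |sin (φ + h / 2)| * |sin (h / 2) - h / 2| + |h| * |sin (φ + h / 2) - sin φ| := by
        simpa only [abs_mul, abs_neg, abs_two] using
          abs_sub (-2 * sin (φ + h / 2) * (sin (h / 2) - h / 2)) (h * (sin (φ + h / 2) - sin φ))
    _ ≤ 2 * 1 * (|h / 2| ^ 3 / 6) + |h| * |h / 2| := by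
        gcongr; exact abs_sin_le_one _
    _ = h ^ 2 / 2 + |h| ^ 3 / 24 := by
        rw [abs_div, abs_two, ← sq_abs h]; ring

theorem sq_sqrt_sub_sqrt_mul_le {a b : ℝ} (ha : 0 ≤ a) (hb : 0 ≤ b) :
    (√b - √a) ^ 2 * a ≤ (b - a) ^ 2 := by
  have hdiff : |√b - √a| * √a ≤ |b - a| :=
    calc |√b - √a| * √a ≤ |√b - √a| * (√b + √a) := by
          gcongr; exact le_add_of_nonneg_left (sqrt_nonneg b)
      _ = |b - a| := by
        rw [← abs_of_nonneg (add_nonneg (sqrt_nonneg b) (sqrt_nonneg a)), ← abs_mul,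
          mul_comm, ← sq_sub_sq, sq_sqrt ha, sq_sqrt hb]
  calc (√b - √a) ^ 2 * a = (|√b - √a| * √a) ^ 2 := by rw [mul_pow, sq_abs, sq_sqrt ha]
    _ ≤ |b - a| ^ 2 := by gcongr
    _ = (b - a) ^ 2 := sq_abs _

theorem sqrt_sub_sqrt_sub_div_eq {a b : ℝ} (ha : 0 < a) (hb : 0 ≤ b) (d : ℝ) :
    √b - √a - d / (2 * √a) = (b - a - d - (√b - √a) ^ 2) / (2 * √a) := by
  have hsa : 0 < √a := sqrt_pos.2 ha
  field_simp
  linear_combination sq_sqrt hb - sq_sqrt ha.le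

theorem abs_sqrt_sub_sqrt_sub_div_le {m a b : ℝ} (hm : 0 < m) (hma : m ≤ a) (hb : 0 ≤ b)
    (d : ℝ) :
    |√b - √a - d / (2 * √a)| ≤ (|b - a - d| + (b - a) ^ 2 / m) / (2 * √m) := by
  have ha : 0 < a := hm.trans_le hma
  have hsq : (√b - √a) ^ 2 ≤ (b - a) ^ 2 / m :=
    calc (√b - √a) ^ 2 ≤ (b - a) ^ 2 / a := by
          rw [le_div_iff₀ ha]; exact sq_sqrt_sub_sqrt_mul_le ha.le hb
      _ ≤ (b - a) ^ 2 / m := by gcongr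
  rw [sqrt_sub_sqrt_sub_div_eq ha hb, abs_div, abs_of_pos (by positivity : (0 : ℝ) < 2 * √a)]
  calc _ ≤ (|b - a - d| + (√b - √a) ^ 2) / (2 * √a) := by
        gcongr
        exact (abs_sub _ _).trans_eq (by rw [abs_of_nonneg (sq_nonneg (√b - √a))])
    _ ≤ (|b - a - d| + (b - a) ^ 2 / m) / (2 * √m) := by gcongr

end Real

section Perturbation

variable (ξ u v φ : ℝ) {t : ℝ}

theorem abs_cos_add_mul_sub_cos_le (ht : 0 ≤ t) : |cos (φ + v * t) - cos φ| ≤ |v| * t := by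
  simpa [abs_mul, abs_of_nonneg ht] using abs_cos_sub_cos_le (φ + v * t) φ

theorem abs_add_mul_mul_cos_add_mul_sub_le (ht : 0 ≤ t) :
    |(ξ + u * t) * cos (φ + v * t) - ξ * cos φ| ≤ (|ξ * v| + |u|) * t :=
  calc _ = |ξ * (cos (φ + v * t) - cos φ) + u * t * cos (φ + v * t)| := by congr 1; ring
    _ ≤ |ξ| * |cos (φ + v * t) - cos φ| + |u| * t * |cos (φ + v * t)| := by
        simpa only [abs_mul, abs_of_nonneg ht] using
          abs_add_le (ξ * (cos (φ + v * t) - cos φ)) (u * t * cos (φ + v * t))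
    _ ≤ |ξ| * (|v| * t) + |u| * t * 1 := by
        gcongr
        · exact abs_cos_add_mul_sub_cos_le v φ ht
        · exact abs_cos_le_one _
    _ = (|ξ * v| + |u|) * t := by rw [abs_mul]; ring

theorem abs_add_mul_mul_cos_add_mul_sub_sub_le (ht : 0 ≤ t) :
    |(ξ + u * t) * cos (φ + v * t) - ξ * cos φ - (u * t * cos φ - ξ * v * t * sin φ)| ≤
      |u| * |v| * t ^ 2 + |ξ| * (v ^ 2 * t ^ 2 / 2 + |v| ^ 3 * t ^ 3 / 24) :=
  calc _ = |u * t * (cos (φ + v * t) - cos φ)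
          + ξ * (cos (φ + v * t) - cos φ + v * t * sin φ)| := by congr 1; ring
    _ ≤ |u| * t * |cos (φ + v * t) - cos φ|
          + |ξ| * |cos (φ + v * t) - cos φ + v * t * sin φ| := by
        simpa only [abs_mul, abs_of_nonneg ht] using abs_add_le (u * t * (cos (φ + v * t) - cos φ))
          (ξ * (cos (φ + v * t) - cos φ + v * t * sin φ))
    _ ≤ |u| * t * (|v| * t) + |ξ| * ((v * t) ^ 2 / 2 + |v * t| ^ 3 / 24) := by
        gcongr
        · exact abs_cos_add_mul_sub_cos_le v φ ht
        · exact abs_cos_add_sub_cos_add_mul_sin_le φ (v * t)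
    _ = _ := by rw [abs_mul, abs_of_nonneg ht]; ring

end Perturbation

theorem taylor_remainder_bound (ξ v₁ v₂ φ t : ℝ) (hξ : |ξ| < 1) (ht : 0 < t)
    (hpos : 0 ≤ 1 + (ξ + 2 * v₁ * t) * Real.cos (φ + v₂ * t)) :
    |Real.sqrt (1 + (ξ + 2 * v₁ * t) * Real.cos (φ + v₂ * t))
        - Real.sqrt (1 + ξ * Real.cos φ)
        - (2 * v₁ * t * Real.cos φ - ξ * v₂ * t * Real.sin φ)
          / (2 * Real.sqrt (1 + ξ * Real.cos φ))| ≤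
      ((|ξ| * v₂ ^ 2 + 4 * |v₁ * v₂|) / (2 * Real.sqrt (1 - |ξ|))
          + (|ξ * v₂| + 2 * |v₁|) ^ 2 / (1 - |ξ|) ^ ((3 : ℝ) / 2)) * t ^ 2
        + (|v₂| ^ 3 / (24 * Real.sqrt (1 - |ξ|))) * t ^ 3 := by
  have hm : 0 < 1 - |ξ| := by linarith
  have hma : 1 - |ξ| ≤ 1 + ξ * cos φ := by
    have : |ξ * cos φ| ≤ |ξ| := by
      rw [abs_mul]; exact mul_le_of_le_one_right (abs_nonneg ξ) (abs_cos_le_one φ)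
    linarith [neg_abs_le (ξ * cos φ)]
  have hfirst := abs_add_mul_mul_cos_add_mul_sub_le ξ (2 * v₁) v₂ φ ht.le
  have hsecond := abs_add_mul_mul_cos_add_mul_sub_sub_le ξ (2 * v₁) v₂ φ ht.le
  have hfirst_sq := pow_le_pow_left₀ (abs_nonneg _) hfirst 2
  rw [sq_abs] at hfirst_sq
  refine (abs_sqrt_sub_sqrt_sub_div_le hm hma hpos _).trans ?_
  rw [add_sub_add_left_eq_sub]
  calc _ ≤ (|2 * v₁| * |v₂| * t ^ 2 + |ξ| * (v₂ ^ 2 * t ^ 2 / 2 + |v₂| ^ 3 * t ^ 3 / 24)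
        + ((|ξ * v₂| + |2 * v₁|) * t) ^ 2 / (1 - |ξ|)) / (2 * √(1 - |ξ|)) := by gcongr
    _ ≤ _ := by
      have hcube : 0 ≤ (1 - |ξ|) * (|v₂| ^ 3 * t) := by positivity
      rw [abs_mul 2 v₁, abs_two, abs_mul v₁, show (3 : ℝ) / 2 = 1 + 1 / 2 by norm_num,
        rpow_add hm, rpow_one, ← sqrt_eq_rpow]
      field_simp
      nlinarith [mul_nonneg hm.le hcube, mul_nonneg hm.le (mul_nonneg (abs_nonneg ξ) (sq_nonneg v₂)),
        mul_nonneg hm.le (mul_nonneg (abs_nonneg v₁) (abs_nonneg v₂))]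
end

section
/- For A, B ≥ 0 with B > 0 and any real C, the identity |√A - √B - C/(2√B)| ≤ |A - B - C|/√B + |C|·|A - B|/(2 B^{3/2}) holds. -/
theorem sqrt_linearization_bound (A B C : ℝ) (hA : 0 ≤ A) (hB : 0 < B) :
    |Real.sqrt A - Real.sqrt B - C / (2 * Real.sqrt B)| ≤
      |A - B - C| / Real.sqrt B + |C| * |A - B| / (2 * B ^ ((3 : ℝ) / 2)) := by
  set s := Real.sqrt A with hsdef
  set t := Real.sqrt B with htdef
  have hs : 0 ≤ s := Real.sqrt_nonneg A
  have ht : 0 < t := Real.sqrt_pos.2 hB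
  have hst : 0 < s + t := by linarith
  have hA2 : s ^ 2 = A := Real.sq_sqrt hA
  have hB2 : t ^ 2 = B := Real.sq_sqrt hB.le
  have hB32 : B ^ ((3 : ℝ) / 2) = t ^ 3 := by
    rw [show (3 : ℝ) / 2 = 1 + 1 / 2 by norm_num, Real.rpow_add hB, Real.rpow_one,
      ← Real.sqrt_eq_rpow, ← htdef, ← hB2]
    ring
  have key : s - t - C / (2 * t) =
      (A - B - C) / (s + t) + C * (t - s) / ((s + t) * (2 * t)) := by
    rw [← hA2, ← hB2]
    field_simp
    ring
  have habs : |A - B| = |t - s| * (s + t) := by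
    rw [← hA2, ← hB2, ← abs_of_pos hst, ← abs_mul]
    rw [show (t - s) * (s + t) = -(s ^ 2 - t ^ 2) by ring, abs_neg]
  have h1 : |(A - B - C) / (s + t)| ≤ |A - B - C| / t := by
    rw [abs_div, abs_of_pos hst]
    exact div_le_div_of_nonneg_left (abs_nonneg _) ht (by linarith)
  have h2 : |C * (t - s) / ((s + t) * (2 * t))| ≤ |C| * |A - B| / (2 * t ^ 3) := by
    rw [abs_div, abs_mul, abs_of_pos (by positivity : (0:ℝ) < (s + t) * (2 * t))]
    rw [div_le_div_iff₀ (by positivity) (by positivity), habs]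
    have hu : 0 ≤ |C| * |t - s| := mul_nonneg (abs_nonneg C) (abs_nonneg (t - s))
    nlinarith [mul_nonneg (mul_nonneg hu hs) (mul_nonneg hs ht.le),
      mul_nonneg (mul_nonneg hu hs) (mul_nonneg ht.le ht.le)]
  calc |s - t - C / (2 * t)|
      ≤ |(A - B - C) / (s + t)| + |C * (t - s) / ((s + t) * (2 * t))| := by
        rw [key]; exact abs_add_le _ _
    _ ≤ |A - B - C| / t + |C| * |A - B| / (2 * t ^ 3) := add_le_add h1 h2
    _ = |A - B - C| / t + |C| * |A - B| / (2 * B ^ ((3 : ℝ) / 2)) := by rw [hB32]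
end
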